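/- Let a>0, α,β∈ℝ and k∈ℂ with k≠0. There exists a twice continuously differentiable function ψ:[-a,a]→ℂ, not identically zero, with −ψ″(x)=k²ψ(x) for all x∈[-a,a], ψ′(a)+(iα+β)ψ(a)=0 and ψ′(−a)+(iα−β)ψ(−a)=0, if and only if (k²−α²−β²)·sin(2ka) − 2βk·cos(2ka) = 0. -/

import Mathlib

/-!
Multiplying by the integrating factors `exp (∓ i k x)` shows that a solution of
`ψ'' = -k² ψ` vanishing to first order at `0` vanishes, so every solution is
`A cos (k x) + B sin (k x)` with `A = ψ 0`, `k B = ψ' 0`. The two boundary conditions are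
then the linear system `M (A, B) = 0`, and a nonzero solution exists iff `det M = 0`;
expanding with the double-angle formulas, `det M` is minus the left-hand side of the
eigenvalue equation.
-/

/-- A nontrivial twice continuously differentiable solution of `-ψ'' = k²ψ`
on `[-a, a]` with separated PT-symmetric boundary conditions `(α, β)`. -/
def IsRobinSol (a α β : ℝ) (k : ℂ) (ψ : ℝ → ℂ) : Prop :=
  ∃ ψ' ψ'' : ℝ → ℂ,
    (∀ x ∈ Set.Icc (-a) a, HasDerivAt ψ (ψ' x) x) ∧
    (∀ x ∈ Set.Icc (-a) a, HasDerivAt ψ' (ψ'' x) x) ∧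
    ContinuousOn ψ'' (Set.Icc (-a) a) ∧
    (∃ x ∈ Set.Icc (-a) a, ψ x ≠ 0) ∧
    (∀ x ∈ Set.Icc (-a) a, -ψ'' x = k ^ 2 * ψ x) ∧
    ψ' a + (Complex.I * (α : ℂ) + (β : ℂ)) * ψ a = 0 ∧
    ψ' (-a) + (Complex.I * (α : ℂ) - (β : ℂ)) * ψ (-a) = 0

open Complex Matrix Set Filter Topology

lemma hasDerivAt_const_mul_ofReal (c : ℂ) (x : ℝ) : HasDerivAt (fun y : ℝ => c * y) c x := by
  simpa using ((hasDerivAt_id (x : ℂ)).const_mul c).comp_ofReal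

lemma Convex.eqOn_zero_of_hasDerivAt_const_mul {s : Set ℝ} (hs : Convex ℝ s) {f : ℝ → ℂ}
    {c : ℂ} (hf : ∀ x ∈ s, HasDerivAt f (c * f x) x) {x₀ : ℝ} (hx₀ : x₀ ∈ s)
    (hf₀ : f x₀ = 0) : ∀ x ∈ s, f x = 0 := by
  intro x hx
  have hderiv : ∀ y ∈ s, HasDerivWithinAt (fun y : ℝ => exp (-c * y) * f y) 0 s y := by
    intro y hy
    have hexp : HasDerivAt (fun y : ℝ => exp (-c * y)) (exp (-c * y) * -c) y :=
      (hasDerivAt_exp _).comp y (hasDerivAt_const_mul_ofReal (-c) y)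
    refine ((hexp.mul (hf y hy)).congr_deriv ?_).hasDerivWithinAt
    ring
  have hconst := hs.norm_image_sub_le_of_norm_hasDerivWithin_le (C := 0) hderiv
    (fun _ _ => by simp) hx₀ hx
  simp only [hf₀, mul_zero, sub_zero, zero_mul, norm_le_zero_iff] at hconst
  exact (mul_eq_zero.mp hconst).resolve_left (exp_ne_zero _)

lemma Convex.eqOn_zero_of_hasDerivAt_neg_sq_mul {s : Set ℝ} (hs : Convex ℝ s)
    {f f' : ℝ → ℂ} {k : ℂ} (hf : ∀ x ∈ s, HasDerivAt f (f' x) x)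
    (hf' : ∀ x ∈ s, HasDerivAt f' (-(k ^ 2 * f x)) x) {x₀ : ℝ} (hx₀ : x₀ ∈ s)
    (hf₀ : f x₀ = 0) (hf'₀ : f' x₀ = 0) : ∀ x ∈ s, f x = 0 ∧ f' x = 0 := by
  -- `f' + i k f` solves `u' = i k u`; once it vanishes, `f' = -i k f`.
  have hu : ∀ x ∈ s, f' x + I * k * f x = 0 := by
    refine hs.eqOn_zero_of_hasDerivAt_const_mul (c := I * k) (fun x hx => ?_) hx₀
      (by simp [hf₀, hf'₀])
    refine ((hf' x hx).add ((hf x hx).const_mul (I * k))).congr_deriv ?_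
    linear_combination (-(k ^ 2 * f x)) * I_sq
  have hf_zero : ∀ x ∈ s, f x = 0 := by
    refine hs.eqOn_zero_of_hasDerivAt_const_mul (c := -(I * k)) (fun x hx => ?_) hx₀ hf₀
    exact (hf x hx).congr_deriv (by linear_combination hu x hx)
  intro x hx
  exact ⟨hf_zero x hx, by simpa [hf_zero x hx] using hu x hx⟩

noncomputable def sinusoid (k A B : ℂ) (x : ℝ) : ℂ :=
  A * cos (k * x) + B * sin (k * x)

lemma hasDerivAt_sinusoid (k A B : ℂ) (x : ℝ) :
    HasDerivAt (sinusoid k A B) (sinusoid k (k * B) (-(k * A)) x) x := by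
  have hlin := hasDerivAt_const_mul_ofReal k x
  refine ((((hasDerivAt_cos _).comp x hlin).const_mul A).add
    (((hasDerivAt_sin _).comp x hlin).const_mul B)).congr_deriv ?_
  simp only [sinusoid]
  ring

lemma Convex.eqOn_sinusoid {s : Set ℝ} (hs : Convex ℝ s) (h₀ : 0 ∈ s) {ψ ψ' : ℝ → ℂ}
    {k A B : ℂ} (hψ : ∀ x ∈ s, HasDerivAt ψ (ψ' x) x)
    (hψ' : ∀ x ∈ s, HasDerivAt ψ' (-(k ^ 2 * ψ x)) x) (hA : ψ 0 = A) (hB : ψ' 0 = k * B) :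
    ∀ x ∈ s, ψ x = sinusoid k A B x ∧ ψ' x = sinusoid k (k * B) (-(k * A)) x := by
  have hsin' (x : ℝ) : HasDerivAt (sinusoid k (k * B) (-(k * A)))
      (-(k ^ 2 * sinusoid k A B x)) x :=
    (hasDerivAt_sinusoid k _ _ x).congr_deriv (by simp only [sinusoid]; ring)
  have hdiff := hs.eqOn_zero_of_hasDerivAt_neg_sq_mul
    (fun x hx => (hψ x hx).sub (hasDerivAt_sinusoid k A B x))
    (fun x hx => ((hψ' x hx).sub (hsin' x)).congr_deriv (by simp only [Pi.sub_apply]; ring))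
    h₀
    (by simp [sinusoid, hA]) (by simp [sinusoid, hB])
  intro x hx
  simpa [sub_eq_zero] using hdiff x hx

lemma exists_sinusoid_ne_zero {s : Set ℝ} (hs : s ∈ 𝓝 0) {k : ℂ} (hk : k ≠ 0)
    {v : Fin 2 → ℂ} (hv : v ≠ 0) : ∃ x ∈ s, sinusoid k (v 0) (v 1) x ≠ 0 := by
  by_contra! hzero
  have hloc : sinusoid k (v 0) (v 1) =ᶠ[𝓝 0] fun _ => 0 := eventually_of_mem hs hzero
  have hv₀ : v 0 = 0 := by simpa [sinusoid] using hzero 0 (mem_of_mem_nhds hs)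
  have hv₁ : k * v 1 = 0 := by
    simpa [sinusoid] using (hasDerivAt_sinusoid k (v 0) (v 1) 0).unique
      ((hasDerivAt_const (0 : ℝ) (0 : ℂ)).congr_of_eventuallyEq hloc)
  exact hv (funext fun i => by fin_cases i <;> simp_all)

/-- Row `j` is the `j`-th boundary functional applied to `cos (k x)` and `sin (k x)`. -/
noncomputable def robinMatrix (a α β : ℝ) (k : ℂ) : Matrix (Fin 2) (Fin 2) ℂ :=
  !![-(k * sin (k * a)) + (I * α + β) * cos (k * a),
      k * cos (k * a) + (I * α + β) * sin (k * a);
     k * sin (k * a) + (I * α - β) * cos (k * a),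
      k * cos (k * a) - (I * α - β) * sin (k * a)]

lemma robinMatrix_mulVec_eq_zero_iff (a α β : ℝ) (k : ℂ) (v : Fin 2 → ℂ) :
    robinMatrix a α β k *ᵥ v = 0 ↔
      sinusoid k (k * v 1) (-(k * v 0)) a + (I * α + β) * sinusoid k (v 0) (v 1) a = 0 ∧
      sinusoid k (k * v 1) (-(k * v 0)) (-a) + (I * α - β) * sinusoid k (v 0) (v 1) (-a) = 0 := by
  rw [funext_iff, Fin.forall_fin_two]
  simp only [robinMatrix, sinusoid, mulVec, dotProduct, Fin.sum_univ_two, of_apply, cons_val',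
    cons_val_zero, cons_val_one, ofReal_neg, mul_neg, cos_neg, sin_neg, Pi.zero_apply]
  refine and_congr ?_ ?_ <;> constructor <;> intro h <;> linear_combination h

lemma det_robinMatrix (a α β : ℝ) (k : ℂ) :
    (robinMatrix a α β k).det =
      -((k ^ 2 - α ^ 2 - β ^ 2) * sin (2 * k * a) - 2 * β * k * cos (2 * k * a)) := by
  rw [robinMatrix, det_fin_two_of, mul_assoc, sin_two_mul, cos_two_mul]
  linear_combination (-2 * (β : ℂ) * k) * sin_sq_add_cos_sq (k * a) +
    (-2 * (α : ℂ) ^ 2 * sin (k * a) * cos (k * a)) * I_sq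

lemma IsRobinSol.exists_robinMatrix_mulVec_eq_zero {a α β : ℝ} (ha : 0 < a) {k : ℂ}
    (hk : k ≠ 0) {ψ : ℝ → ℂ} (hψ : IsRobinSol a α β k ψ) :
    ∃ v ≠ 0, robinMatrix a α β k *ᵥ v = 0 := by
  obtain ⟨ψ', ψ'', hψ, hψ', -, ⟨x₀, hx₀, hψx₀⟩, hode, hright, hleft⟩ := hψ
  have hsol := (convex_Icc (-a) a).eqOn_sinusoid ⟨by linarith, ha.le⟩ hψ
    (fun x hx => (hψ' x hx).congr_deriv (by rw [← hode x hx, neg_neg]))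
    rfl (mul_div_cancel₀ (ψ' 0) hk).symm
  refine ⟨![ψ 0, ψ' 0 / k], fun hv => hψx₀ ?_, (robinMatrix_mulVec_eq_zero_iff ..).2 ?_⟩
  · have hA := congrFun hv 0
    have hB := congrFun hv 1
    simp only [cons_val_zero, cons_val_one, Pi.zero_apply] at hA hB
    simp [(hsol x₀ hx₀).1, sinusoid, hA, hB]
  · obtain ⟨hψa, hψ'a⟩ := hsol a ⟨by linarith, le_rfl⟩
    obtain ⟨hψna, hψ'na⟩ := hsol (-a) ⟨le_rfl, by linarith⟩
    simp only [cons_val_zero, cons_val_one]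
    rw [← hψa, ← hψ'a, ← hψna, ← hψ'na]
    exact ⟨hright, hleft⟩

lemma isRobinSol_sinusoid {a α β : ℝ} (ha : 0 < a) {k : ℂ} (hk : k ≠ 0) {v : Fin 2 → ℂ}
    (hv : v ≠ 0) (hMv : robinMatrix a α β k *ᵥ v = 0) :
    IsRobinSol a α β k (sinusoid k (v 0) (v 1)) := by
  obtain ⟨hright, hleft⟩ := (robinMatrix_mulVec_eq_zero_iff a α β k v).1 hMv
  refine ⟨_, _, fun x _ => hasDerivAt_sinusoid .., fun x _ => hasDerivAt_sinusoid ..,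
    (by unfold sinusoid; fun_prop : Continuous _).continuousOn,
    exists_sinusoid_ne_zero (Icc_mem_nhds (by linarith) ha) hk hv,
    fun x _ => by simp only [sinusoid]; ring, hright, hleft⟩

/-- the eigenvalue equation
`(k² - α² - β²) sin(2ka) - 2βk cos(2ka) = 0` characterizes the eigenvalues
`λ = k²` of the zero-curvature PT-symmetric Robin problem. -/
theorem pt_zero_curvature_eigenvalue_equation
    (a α β : ℝ) (ha : 0 < a) (k : ℂ) (hk : k ≠ 0) :
    (∃ ψ : ℝ → ℂ, IsRobinSol a α β k ψ) ↔
      (k ^ 2 - (α : ℂ) ^ 2 - (β : ℂ) ^ 2) * Complex.sin (2 * k * (a : ℂ))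
        - 2 * (β : ℂ) * k * Complex.cos (2 * k * (a : ℂ)) = 0 := by
  rw [← neg_eq_zero, ← det_robinMatrix, ← exists_mulVec_eq_zero_iff]
  constructor
  · rintro ⟨ψ, hψ⟩
    exact hψ.exists_robinMatrix_mulVec_eq_zero ha hk
  · rintro ⟨v, hv, hMv⟩
    exact ⟨_, isRobinSol_sinusoid ha hk hv hMv⟩
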